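/- arXiv:1403.2346 — 4 statements merged into one kernel-verified Lean document; each statement's English description precedes it below -/
import Mathlib

section
/- If v is a C² function on a ball B ⊂ ℝ^{n+1} contained in {y > 0} satisfying -Δv = |∇v|² + (a/y) ∂v/∂y, then the function w = |∇v|² satisfies the Bochner-type identity (1/2)Δw = |∇²v|² - ∇w·∇v - (a/(2y)) ∂w/∂y + (a/y²) (∂v/∂y)². -/
/-- Partial derivative in the `i`-th coordinate direction. -/
noncomputable def pd {m : ℕ} (i : Fin m) (f : EuclideanSpace ℝ (Fin m) → ℝ)
    (z : EuclideanSpace ℝ (Fin m)) : ℝ :=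
  fderiv ℝ f z (EuclideanSpace.single i 1)

/-- Euclidean Laplacian as the sum of second partial derivatives. -/
noncomputable def lap {m : ℕ} (f : EuclideanSpace ℝ (Fin m) → ℝ)
    (z : EuclideanSpace ℝ (Fin m)) : ℝ :=
  ∑ i, pd i (fun w => pd i f w) z

/-!
For every `C³` function, `½ Δ|∇v|² = |∇²v|² + ∇v · ∇Δv`: apply `Δ(g²) = 2|∇g|² + 2 g Δg` to
`g = ∂ⱼv` and use `Δ ∂ⱼv = ∂ⱼ Δv` (symmetry of third derivatives). Differentiating the equation
gives `∇Δv = -∇w - (a/y) ∇∂_y v + (a/y²) ∂_y v e_y`, and `∇v · ∇∂_y v = ½ ∂_y w`, which turns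
`∇v · ∇Δv` into the remaining three terms of the identity.
-/

open Filter Topology

section PartialDerivatives

variable {m : ℕ} {f g : EuclideanSpace ℝ (Fin m) → ℝ} {z : EuclideanSpace ℝ (Fin m)}

theorem Filter.EventuallyEq.pd_eq (h : f =ᶠ[𝓝 z] g) (i : Fin m) : pd i f z = pd i g z := by
  unfold pd
  rw [h.fderiv_eq]

theorem contDiffAt_pd {n k : WithTop ℕ∞} (hf : ContDiffAt ℝ n f z) (hkn : k + 1 ≤ n)
    (i : Fin m) : ContDiffAt ℝ k (pd i f) z :=
  (hf.fderiv_right hkn).clm_apply contDiffAt_const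

theorem ContDiffAt.eventually_differentiableAt (hf : ContDiffAt ℝ 2 f z) :
    ∀ᶠ x in 𝓝 z, DifferentiableAt ℝ f x :=
  (hf.eventually (by simp)).mono fun _ hx => hx.differentiableAt (by simp)

theorem pd_pd_comm (hf : ContDiffAt ℝ 2 f z) (i j : Fin m) :
    pd i (pd j f) z = pd j (pd i f) z := by
  have hdiff : DifferentiableAt ℝ (fderiv ℝ f) z :=
    (hf.fderiv_right (m := 1) (by norm_num)).differentiableAt (by simp)
  have hsnd (i j : Fin m) : pd i (pd j f) z =
      fderiv ℝ (fderiv ℝ f) z (EuclideanSpace.single i 1) (EuclideanSpace.single j 1) := by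
    change fderiv ℝ (fun w => fderiv ℝ f w (EuclideanSpace.single j 1)) z _ = _
    rw [fderiv_clm_apply hdiff (differentiableAt_const _)]
    simp
  rw [hsnd, hsnd]
  exact hf.isSymmSndFDerivAt (by simp [minSmoothness_of_isRCLikeNormedField]) _ _

theorem pd_fun_sum {ι : Type*} [Fintype ι] {g : ι → EuclideanSpace ℝ (Fin m) → ℝ}
    (hg : ∀ j, DifferentiableAt ℝ (g j) z) (i : Fin m) :
    pd i (fun x => ∑ j, g j x) z = ∑ j, pd i (g j) z := by
  unfold pd
  rw [fderiv_fun_sum fun j _ => hg j]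
  simp

theorem pd_fun_add (hf : DifferentiableAt ℝ f z) (hg : DifferentiableAt ℝ g z) (i : Fin m) :
    pd i (fun x => f x + g x) z = pd i f z + pd i g z := by
  unfold pd
  rw [fderiv_fun_add hf hg]
  rfl

theorem pd_fun_neg (i : Fin m) : pd i (fun x => -f x) z = -pd i f z := by
  unfold pd
  rw [fderiv_fun_neg]
  rfl

theorem pd_const_mul (hf : DifferentiableAt ℝ f z) (b : ℝ) (i : Fin m) :
    pd i (fun x => b * f x) z = b * pd i f z := by
  unfold pd
  rw [fderiv_const_mul hf]
  rfl

theorem pd_fun_mul (hf : DifferentiableAt ℝ f z) (hg : DifferentiableAt ℝ g z) (i : Fin m) :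
    pd i (fun x => f x * g x) z = pd i f z * g z + f z * pd i g z := by
  unfold pd
  rw [fderiv_fun_mul hf hg]
  simp only [add_apply, smul_apply, smul_eq_mul]
  ring

theorem pd_fun_sq (hf : DifferentiableAt ℝ f z) (i : Fin m) :
    pd i (fun x => f x ^ 2) z = 2 * f z * pd i f z := by
  simp only [sq, pd_fun_mul hf hf]
  ring

theorem pd_fun_inv (hf : DifferentiableAt ℝ f z) (hz : f z ≠ 0) (i : Fin m) :
    pd i (fun x => (f x)⁻¹) z = -pd i f z / f z ^ 2 := by
  have h : HasFDerivAt (fun x => (f x)⁻¹) ((-(f z ^ 2)⁻¹) • fderiv ℝ f z) z :=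
    (hasDerivAt_inv hz).comp_hasFDerivAt z hf.hasFDerivAt
  unfold pd
  rw [h.fderiv, smul_apply, smul_eq_mul]
  ring

theorem pd_coord (i k : Fin m) :
    pd i (fun x : EuclideanSpace ℝ (Fin m) => x k) z = if i = k then 1 else 0 := by
  have h : HasFDerivAt (fun x : EuclideanSpace ℝ (Fin m) => x k)
      (EuclideanSpace.proj k : EuclideanSpace ℝ (Fin m) →L[ℝ] ℝ) z :=
    (EuclideanSpace.proj k : EuclideanSpace ℝ (Fin m) →L[ℝ] ℝ).hasFDerivAt
  unfold pd
  rw [h.fderiv]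
  simp [eq_comm]

theorem pd_sum_sq_pd (hf : ContDiffAt ℝ 2 f z) (i : Fin m) :
    pd i (fun x => ∑ j, pd j f x ^ 2) z = 2 * ∑ j, pd j f z * pd j (pd i f) z := by
  have hd (j : Fin m) : DifferentiableAt ℝ (pd j f) z :=
    (contDiffAt_pd hf (k := 1) (by norm_num) j).differentiableAt (by simp)
  rw [pd_fun_sum fun j => (hd j).fun_pow 2, Finset.mul_sum]
  refine Finset.sum_congr rfl fun j _ => ?_
  rw [pd_fun_sq (hd j), pd_pd_comm hf]
  ring

end PartialDerivatives

section Laplacian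

variable {m : ℕ} {f : EuclideanSpace ℝ (Fin m) → ℝ} {z : EuclideanSpace ℝ (Fin m)}

theorem lap_fun_sum {ι : Type*} [Fintype ι] {g : ι → EuclideanSpace ℝ (Fin m) → ℝ}
    (hg : ∀ j, ContDiffAt ℝ 2 (g j) z) : lap (fun x => ∑ j, g j x) z = ∑ j, lap (g j) z := by
  have hpd (i : Fin m) : pd i (fun x => ∑ j, g j x) =ᶠ[𝓝 z] fun x => ∑ j, pd i (g j) x := by
    filter_upwards [eventually_all.2 fun j => (hg j).eventually_differentiableAt] with x hx
    exact pd_fun_sum hx i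
  have hd (i : Fin m) (j : ι) : DifferentiableAt ℝ (pd i (g j)) z :=
    (contDiffAt_pd (hg j) (k := 1) (by norm_num) i).differentiableAt (by simp)
  unfold lap
  rw [Finset.sum_comm]
  exact Finset.sum_congr rfl fun i _ => by rw [(hpd i).pd_eq, pd_fun_sum (hd i)]

theorem lap_fun_sq (hf : ContDiffAt ℝ 2 f z) :
    lap (fun x => f x ^ 2) z = 2 * (∑ i, pd i f z ^ 2 + f z * lap f z) := by
  have hd : DifferentiableAt ℝ f z := hf.differentiableAt (by simp)
  have hpd (i : Fin m) : pd i (fun x => f x ^ 2) =ᶠ[𝓝 z] fun x => 2 * f x * pd i f x :=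
    hf.eventually_differentiableAt.mono fun x hx => pd_fun_sq hx i
  have hi (i : Fin m) :
      pd i (pd i fun x => f x ^ 2) z = 2 * (pd i f z ^ 2 + f z * pd i (pd i f) z) := by
    have hdi := (contDiffAt_pd hf (k := 1) (by norm_num) i).differentiableAt (by simp)
    rw [(hpd i).pd_eq, pd_fun_mul (f := fun x => 2 * f x) (hd.const_mul 2) hdi,
      pd_const_mul hd]
    ring
  unfold lap
  rw [Finset.sum_congr rfl fun i _ => hi i]
  simp only [Finset.mul_sum, ← Finset.sum_add_distrib]

theorem pd_lap (hf : ContDiffAt ℝ 3 f z) (j : Fin m) : pd j (lap f) z = lap (pd j f) z := by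
  have hcomm (i : Fin m) : pd i (pd j f) =ᶠ[𝓝 z] pd j (pd i f) :=
    (hf.eventually (by simp)).mono fun x hx => pd_pd_comm (hx.of_le (by norm_num)) i j
  have hd (i : Fin m) : DifferentiableAt ℝ (pd i (pd i f)) z :=
    (contDiffAt_pd (contDiffAt_pd hf (k := 2) (by norm_num) i) (k := 1) (by norm_num) i
      ).differentiableAt (by simp)
  unfold lap
  rw [pd_fun_sum hd]
  refine Finset.sum_congr rfl fun i _ => ?_
  rw [(hcomm i).pd_eq, pd_pd_comm (contDiffAt_pd hf (by norm_num) i)]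

theorem half_lap_sum_sq_pd (hf : ContDiffAt ℝ 3 f z) :
    1 / 2 * lap (fun x => ∑ j, pd j f x ^ 2) z =
      ∑ i, ∑ j, pd i (pd j f) z ^ 2 + ∑ j, pd j f z * pd j (lap f) z := by
  have hf2 (j : Fin m) : ContDiffAt ℝ 2 (pd j f) z := contDiffAt_pd hf (by norm_num) j
  rw [lap_fun_sum fun j => (hf2 j).pow 2]
  simp only [lap_fun_sq (hf2 _), pd_lap hf]
  rw [Finset.sum_comm (f := fun i j => pd i (pd j f) z ^ 2), ← Finset.sum_add_distrib,
    Finset.mul_sum]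
  exact Finset.sum_congr rfl fun j _ => by ring

end Laplacian

section Equation

variable {m : ℕ} {f : EuclideanSpace ℝ (Fin m) → ℝ} {z : EuclideanSpace ℝ (Fin m)}

theorem pd_lap_of_neg_lap_eq {a : ℝ} {k : Fin m} (hf : ContDiffAt ℝ 2 f z) (hz : z k ≠ 0)
    (heq : ∀ᶠ x in 𝓝 z, -lap f x = ∑ i, pd i f x ^ 2 + a / x k * pd k f x) (j : Fin m) :
    pd j (lap f) z = -pd j (fun x => ∑ i, pd i f x ^ 2) z - a / z k * pd j (pd k f) z
      + if j = k then a / z k ^ 2 * pd k f z else 0 := by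
  have hd (i : Fin m) : DifferentiableAt ℝ (pd i f) z :=
    (contDiffAt_pd hf (k := 1) (by norm_num) i).differentiableAt (by simp)
  have hcoord : DifferentiableAt ℝ (fun x : EuclideanSpace ℝ (Fin m) => x k) z := by fun_prop
  have hlap : lap f =ᶠ[𝓝 z] fun x => -(∑ i, pd i f x ^ 2 + a * pd k f x * (x k)⁻¹) :=
    heq.mono fun x hx => by linear_combination -hx
  rw [hlap.pd_eq, pd_fun_neg, pd_fun_add (DifferentiableAt.fun_sum fun i _ => (hd i).fun_pow 2)
    (((hd k).const_mul a).fun_mul (hcoord.fun_inv hz)),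
    pd_fun_mul (f := fun x => a * pd k f x) ((hd k).const_mul a) (hcoord.fun_inv hz),
    pd_const_mul (hd k), pd_fun_inv hcoord hz, pd_coord]
  split_ifs <;> ring

end Equation

theorem stmt2_general (n : ℕ) (a : ℝ)
    (c : EuclideanSpace ℝ (Fin (n+1))) (R : ℝ)
    (hball : Metric.ball c R ⊆ {z : EuclideanSpace ℝ (Fin (n+1)) | 0 < z (Fin.last n)})
    (v : EuclideanSpace ℝ (Fin (n+1)) → ℝ)
    (hv : ContDiffOn ℝ 3 v (Metric.ball c R))
    (hode : ∀ z ∈ Metric.ball c R,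
      - lap v z = (∑ i, (pd i v z) ^ 2) + (a / z (Fin.last n)) * pd (Fin.last n) v z) :
    ∀ z ∈ Metric.ball c R,
      (1/2 : ℝ) * lap (fun w => ∑ i, (pd i v w) ^ 2) z =
        (∑ i, ∑ j, (pd i (fun w => pd j v w) z) ^ 2)
          - (∑ i, pd i (fun w => ∑ j, (pd j v w) ^ 2) z * pd i v z)
          - (a / (2 * z (Fin.last n))) * pd (Fin.last n) (fun w => ∑ j, (pd j v w) ^ 2) z
          + (a / (z (Fin.last n)) ^ 2) * (pd (Fin.last n) v z) ^ 2 := by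
  intro z hz
  have hy : z (Fin.last n) ≠ 0 := (hball hz).ne'
  have hv3 : ContDiffAt ℝ 3 v z := hv.contDiffAt (Metric.isOpen_ball.mem_nhds hz)
  have hv2 : ContDiffAt ℝ 2 v z := hv3.of_le (by norm_num)
  have heq := eventually_of_mem (Metric.isOpen_ball.mem_nhds hz) hode
  have hterm (j : Fin (n + 1)) : pd j v z * pd j (lap v) z =
      -(pd j (fun w => ∑ i, pd i v w ^ 2) z * pd j v z)
        - a / z (Fin.last n) * (pd j v z * pd j (pd (Fin.last n) v) z)
        + if j = Fin.last n then a / z (Fin.last n) ^ 2 * pd (Fin.last n) v z ^ 2 else 0 := by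
    rw [pd_lap_of_neg_lap_eq hv2 hy heq]
    split_ifs with h
    · subst h; ring
    · ring
  rw [half_lap_sum_sq_pd hv3, pd_sum_sq_pd hv2, Finset.sum_congr rfl fun j _ => hterm j,
    Finset.sum_add_distrib, Finset.sum_sub_distrib, Finset.sum_neg_distrib, ← Finset.mul_sum,
    Fintype.sum_ite_eq']
  field_simp
  ring

/-- Bochner-type identity: if `v` is smooth on a ball `B ⊆ {y > 0}` and
`-Δv = |∇v|² + (a/y) ∂v/∂y` on `B`, then `w = |∇v|²` satisfies
`(1/2)Δw = |∇²v|² - ∇w·∇v - (a/(2y)) ∂w/∂y + (a/y²)(∂v/∂y)²`. -/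
theorem stmt2 (n : ℕ) (a : ℝ) (ha : a ∈ Set.Ioo (-1 : ℝ) 1)
    (c : EuclideanSpace ℝ (Fin (n+1))) (R : ℝ) (hR : 0 < R)
    (hball : Metric.ball c R ⊆ {z : EuclideanSpace ℝ (Fin (n+1)) | 0 < z (Fin.last n)})
    (v : EuclideanSpace ℝ (Fin (n+1)) → ℝ)
    (hv : ContDiffOn ℝ 3 v (Metric.ball c R))
    (hode : ∀ z ∈ Metric.ball c R,
      - lap v z = (∑ i, (pd i v z) ^ 2) + (a / z (Fin.last n)) * pd (Fin.last n) v z) :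
    ∀ z ∈ Metric.ball c R,
      (1/2 : ℝ) * lap (fun w => ∑ i, (pd i v w) ^ 2) z =
        (∑ i, ∑ j, (pd i (fun w => pd j v w) z) ^ 2)
          - (∑ i, pd i (fun w => ∑ j, (pd j v w) ^ 2) z * pd i v z)
          - (a / (2 * z (Fin.last n))) * pd (Fin.last n) (fun w => ∑ j, (pd j v w) ^ 2) z
          + (a / (z (Fin.last n)) ^ 2) * (pd (Fin.last n) v z) ^ 2 :=
  stmt2_general n a c R hball v hv hode
end

section
/- Let a ∈ (-1,1) and let Φ : [0,∞) → ℝ be a C² solution of Φ''(t) + (a/t)Φ'(t) - Φ(t) = 0 on (0,∞), continuous at 0, with Φ(0) = 1 and Φ(t) → 0 as t → +∞. Then Φ(t) > 0 for all t ≥ 0 and Φ is strictly decreasing on (0,∞). -/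
/-!
With `g t = t ^ a * Φ' t` the equation reads `g' = t ^ a * Φ`. Hence if `Φ > 0` on an
interval and `Φ' ≥ 0` at its left end, `g` and so `Φ'` stay positive and `Φ` increases
strictly; the same holds for `-Φ`. This excludes a negative minimum of `Φ`, which would exist
if `Φ` took a negative value since `Φ → 0` at infinity, and it excludes a point with `Φ' ≥ 0`.
A zero `s > 0` of `Φ ≥ 0` is a minimum, so `Φ' s = 0`; as `exp (k t) * (Φ ^ 2 + Φ' ^ 2)` is
nondecreasing on `[p, s]` for `k = 2 + 2 |a| / p`, `Φ` vanishes on `(0, s]`, contradicting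
`Φ 0 = 1`.
-/

open Set Filter Topology Real

theorem strictMonoOn_Icc_of_hasDerivAt_pos {f f' : ℝ → ℝ} {p q : ℝ}
    (hf : ∀ t ∈ Icc p q, HasDerivAt f (f' t) t) (hf' : ∀ t ∈ Ioo p q, 0 < f' t) :
    StrictMonoOn f (Icc p q) :=
  strictMonoOn_of_hasDerivWithinAt_pos (convex_Icc p q)
    (fun t ht => (hf t ht).continuousAt.continuousWithinAt)
    (by simpa only [interior_Icc] using
      fun t ht => (hf t (Ioo_subset_Icc_self ht)).hasDerivWithinAt)
    (by simpa only [interior_Icc] using hf')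

theorem monotoneOn_Icc_of_hasDerivAt_nonneg {f f' : ℝ → ℝ} {p q : ℝ}
    (hf : ∀ t ∈ Icc p q, HasDerivAt f (f' t) t) (hf' : ∀ t ∈ Ioo p q, 0 ≤ f' t) :
    MonotoneOn f (Icc p q) :=
  monotoneOn_of_hasDerivWithinAt_nonneg (convex_Icc p q)
    (fun t ht => (hf t ht).continuousAt.continuousWithinAt)
    (by simpa only [interior_Icc] using
      fun t ht => (hf t (Ioo_subset_Icc_self ht)).hasDerivWithinAt)
    (by simpa only [interior_Icc] using hf')

structure IsWeightedBesselSol (a : ℝ) (Φ Φ' : ℝ → ℝ) : Prop where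
  hasDerivAt : ∀ t > 0, HasDerivAt Φ (Φ' t) t
  hasDerivAt_deriv : ∀ t > 0, HasDerivAt Φ' (Φ t - a / t * Φ' t) t

namespace IsWeightedBesselSol

variable {a : ℝ} {Φ Φ' : ℝ → ℝ}

theorem neg (h : IsWeightedBesselSol a Φ Φ') : IsWeightedBesselSol a (-Φ) (-Φ') where
  hasDerivAt t ht := (h.hasDerivAt t ht).neg
  hasDerivAt_deriv t ht :=
    (h.hasDerivAt_deriv t ht).neg.congr_deriv (by simp only [Pi.neg_apply]; ring)

theorem hasDerivAt_rpow_mul (h : IsWeightedBesselSol a Φ Φ') {t : ℝ} (ht : 0 < t) :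
    HasDerivAt (fun s => s ^ a * Φ' s) (t ^ a * Φ t) t := by
  refine ((hasDerivAt_rpow_const (Or.inl ht.ne')).mul (h.hasDerivAt_deriv t ht)).congr_deriv ?_
  rw [rpow_sub_one ht.ne']
  field_simp
  ring

theorem strictMonoOn_Icc_of_pos (h : IsWeightedBesselSol a Φ Φ') {p q : ℝ} (hp : 0 < p)
    (hpos : ∀ t ∈ Ioo p q, 0 < Φ t) (hp' : 0 ≤ Φ' p) : StrictMonoOn Φ (Icc p q) := by
  have hg : StrictMonoOn (fun s => s ^ a * Φ' s) (Icc p q) :=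
    strictMonoOn_Icc_of_hasDerivAt_pos (fun t ht => h.hasDerivAt_rpow_mul (hp.trans_le ht.1))
      (fun t ht => mul_pos (rpow_pos_of_pos (hp.trans ht.1) a) (hpos t ht))
  refine strictMonoOn_Icc_of_hasDerivAt_pos (fun t ht => h.hasDerivAt t (hp.trans_le ht.1))
    fun t ht => ?_
  have hgt : p ^ a * Φ' p < t ^ a * Φ' t :=
    hg (left_mem_Icc.2 (ht.1.trans ht.2).le) (Ioo_subset_Icc_self ht) ht.1
  exact pos_of_mul_pos_right ((mul_nonneg (rpow_pos_of_pos hp a).le hp').trans_lt hgt)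
    (rpow_pos_of_pos (hp.trans ht.1) a).le

theorem not_isLocalMin_of_neg (h : IsWeightedBesselSol a Φ Φ') {s : ℝ} (hs : 0 < s)
    (hneg : Φ s < 0) : ¬IsLocalMin Φ s := by
  intro hmin
  have hs' : Φ' s = 0 := hmin.hasDerivAt_eq_zero (h.hasDerivAt s hs)
  have hev : ∀ᶠ t in 𝓝[>] s, Φ t < 0 ∧ Φ s ≤ Φ t :=
    ((h.hasDerivAt s hs).continuousAt.eventually_lt continuousAt_const hneg).filter_mono
      nhdsWithin_le_nhds |>.and (hmin.filter_mono nhdsWithin_le_nhds)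
  obtain ⟨u, hsu, hu⟩ := mem_nhdsGT_iff_exists_Ioo_subset.1 hev
  have hmid : (s + u) / 2 ∈ Ioo s u := ⟨by linarith [hsu.out], by linarith [hsu.out]⟩
  have hanti : StrictMonoOn (-Φ) (Icc s ((s + u) / 2)) :=
    h.neg.strictMonoOn_Icc_of_pos hs
      (fun t ht => neg_pos.2 (hu ⟨ht.1, ht.2.trans hmid.2⟩).1) (by simp [hs'])
  have := hanti (left_mem_Icc.2 hmid.1.le) (right_mem_Icc.2 hmid.1.le) hmid.1
  simp only [Pi.neg_apply, neg_lt_neg_iff] at this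
  exact (hu hmid).2.not_gt this

theorem eq_zero_of_eq_zero_of_deriv_eq_zero (h : IsWeightedBesselSol a Φ Φ') {p s : ℝ}
    (hp : 0 < p) (hps : p ≤ s) (hs : Φ s = 0) (hs' : Φ' s = 0) : Φ p = 0 := by
  set k := 2 + 2 * |a| / p
  have hmono : MonotoneOn (fun t => exp (k * t) * (Φ t ^ 2 + Φ' t ^ 2)) (Icc p s) := by
    refine monotoneOn_Icc_of_hasDerivAt_nonneg (f' := fun t => exp (k * t) *
      (2 * (Φ t + Φ' t) ^ 2 + 2 * |a| / p * Φ t ^ 2 + 2 * (|a| / p - a / t) * Φ' t ^ 2))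
      (fun t ht => ?_) (fun t ht => ?_)
    · have ht0 : 0 < t := hp.trans_le ht.1
      refine ((((hasDerivAt_id t).const_mul k).exp).mul
        (((h.hasDerivAt t ht0).pow 2).add ((h.hasDerivAt_deriv t ht0).pow 2))).congr_deriv ?_
      simp only [id, k, Pi.add_apply, Pi.pow_apply]
      ring
    · have hat : a / t ≤ |a| / p :=
        (div_le_div_of_nonneg_right (le_abs_self a) (hp.trans ht.1).le).trans
          (div_le_div_of_nonneg_left (abs_nonneg a) hp ht.1.le)
      have : 0 ≤ |a| / p - a / t := sub_nonneg.2 hat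
      positivity
  have hle : exp (k * p) * (Φ p ^ 2 + Φ' p ^ 2) ≤ 0 := by
    simpa [hs, hs'] using hmono (left_mem_Icc.2 hps) (right_mem_Icc.2 hps) hps
  have hsq : Φ p ^ 2 + Φ' p ^ 2 ≤ 0 := nonpos_of_mul_nonpos_right hle (exp_pos _)
  nlinarith [sq_nonneg (Φ p), sq_nonneg (Φ' p)]

theorem nonneg (h : IsWeightedBesselSol a Φ Φ') (hcont : ContinuousOn Φ (Ici 0)) (h0 : 0 ≤ Φ 0)
    (hlim : Tendsto Φ atTop (𝓝 0)) {t : ℝ} (ht : 0 ≤ t) : 0 ≤ Φ t := by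
  by_contra! hneg
  have hfar : ∀ᶠ x in cocompact ℝ ⊓ 𝓟 (Ici 0), Φ t ≤ Φ x := by
    rw [cocompact_eq_atBot_atTop, inf_sup_right, (disjoint_atBot_principal_Ici (0 : ℝ)).eq_bot,
      bot_sup_eq]
    exact (hlim.eventually (eventually_ge_nhds hneg)).filter_mono inf_le_left
  obtain ⟨s, hs, hmin⟩ := hcont.exists_isMinOn' isClosed_Ici ht hfar
  have hs_neg : Φ s < 0 := (hmin ht).trans_lt hneg
  have hs_pos : 0 < s := hs.lt_of_ne (by rintro rfl; linarith)
  exact h.not_isLocalMin_of_neg hs_pos hs_neg (hmin.isLocalMin (Ici_mem_nhds hs_pos))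

theorem pos_of_nonneg (h : IsWeightedBesselSol a Φ Φ') (hcont : ContinuousWithinAt Φ (Ioi 0) 0)
    (h0 : Φ 0 ≠ 0) (hnn : ∀ t > 0, 0 ≤ Φ t) {s : ℝ} (hs : 0 < s) : 0 < Φ s := by
  refine (hnn s hs).lt_of_ne' fun hzero => h0 ?_
  have hmin : IsMinOn Φ (Ioi 0) s := fun t ht => hzero ▸ hnn t ht
  have hs' : Φ' s = 0 :=
    (hmin.isLocalMin (Ioi_mem_nhds hs)).hasDerivAt_eq_zero (h.hasDerivAt s hs)
  have hvanish : Φ =ᶠ[𝓝[>] 0] 0 := eventually_of_mem (Ioc_mem_nhdsGT hs) fun p hp =>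
    h.eq_zero_of_eq_zero_of_deriv_eq_zero hp.1 hp.2 hzero hs'
  exact tendsto_nhds_unique hcont (tendsto_const_nhds.congr' hvanish.symm)

theorem strictAntiOn (h : IsWeightedBesselSol a Φ Φ') (hpos : ∀ t > 0, 0 < Φ t)
    (hlim : Tendsto Φ atTop (𝓝 0)) : StrictAntiOn Φ (Ioi 0) := by
  have hderiv : ∀ t > 0, Φ' t < 0 := by
    intro p hp
    by_contra! hp'
    have hmono : ∀ t ≥ p, Φ p ≤ Φ t := fun t ht =>
      (h.strictMonoOn_Icc_of_pos hp (fun u hu => hpos u (hp.trans hu.1)) hp').monotoneOn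
        (left_mem_Icc.2 ht) (right_mem_Icc.2 ht) ht
    exact (hpos p hp).not_ge (ge_of_tendsto hlim (eventually_atTop.2 ⟨p, hmono⟩))
  exact strictAntiOn_of_hasDerivWithinAt_neg (convex_Ioi 0)
    (fun t ht => (h.hasDerivAt t ht).continuousAt.continuousWithinAt)
    (by simpa only [interior_Ioi] using
      fun t (ht : t ∈ Ioi 0) => (h.hasDerivAt t ht).hasDerivWithinAt)
    (by simpa only [interior_Ioi] using fun t (ht : t ∈ Ioi 0) => hderiv t ht)

end IsWeightedBesselSol

theorem stmt5_general (a : ℝ)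
    (Φ Φ' Φ'' : ℝ → ℝ)
    (hcont : ContinuousOn Φ (Set.Ici 0))
    (hd1 : ∀ t > (0:ℝ), HasDerivAt Φ (Φ' t) t)
    (hd2 : ∀ t > (0:ℝ), HasDerivAt Φ' (Φ'' t) t)
    (hode : ∀ t > (0:ℝ), Φ'' t + (a / t) * Φ' t - Φ t = 0)
    (h0 : Φ 0 = 1)
    (hlim : Filter.Tendsto Φ Filter.atTop (nhds 0)) :
    (∀ t ≥ (0:ℝ), 0 < Φ t) ∧ StrictAntiOn Φ (Set.Ioi 0) := by
  have h : IsWeightedBesselSol a Φ Φ' :=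
    ⟨hd1, fun t ht => (hd2 t ht).congr_deriv (by linarith [hode t ht])⟩
  have hpos : ∀ t > 0, 0 < Φ t :=
    fun t => h.pos_of_nonneg ((hcont.continuousWithinAt self_mem_Ici).mono Ioi_subset_Ici_self)
      (by simp [h0]) fun s hs => h.nonneg hcont (by simp [h0]) hlim hs.le
  refine ⟨fun t ht => ?_, h.strictAntiOn hpos hlim⟩
  rcases ht.eq_or_lt with rfl | ht
  · simp [h0]
  · exact hpos t ht

/-- If `Φ` solves `Φ'' + (a/t)Φ' - Φ = 0` on `(0,∞)`, is continuous at `0` with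
`Φ(0) = 1`, and `Φ(t) → 0` as `t → ∞`, then `Φ > 0` on `[0,∞)` and `Φ` is
strictly decreasing on `(0,∞)`. -/
theorem stmt5 (a : ℝ) (ha : a ∈ Set.Ioo (-1 : ℝ) 1)
    (Φ Φ' Φ'' : ℝ → ℝ)
    (hcont : ContinuousOn Φ (Set.Ici 0))
    (hd1 : ∀ t > (0:ℝ), HasDerivAt Φ (Φ' t) t)
    (hd2 : ∀ t > (0:ℝ), HasDerivAt Φ' (Φ'' t) t)
    (hd2cont : ContinuousOn Φ'' (Set.Ioi 0))
    (hode : ∀ t > (0:ℝ), Φ'' t + (a / t) * Φ' t - Φ t = 0)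
    (h0 : Φ 0 = 1)
    (hlim : Filter.Tendsto Φ Filter.atTop (nhds 0)) :
    (∀ t ≥ (0:ℝ), 0 < Φ t) ∧ StrictAntiOn Φ (Set.Ioi 0) :=
  stmt5_general a Φ Φ' Φ'' hcont hd1 hd2 hode h0 hlim
end

section
/- Let H : (0,∞) → (0,∞) be differentiable and N : (0,∞) → ℝ with N(r) ≤ d for all r ∈ (0,R], and suppose (d/dr) log H(r) ≤ 2d/r + (1/(1-a)) N'(r) on (0,R], where N is absolutely continuous, N ≥ 0. Then for all 0 < r₁ ≤ r₂ ≤ R, H(r₂)/H(r₁) ≤ e^{d/(1-a)} (r₂/r₁)^{2d}. -/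
/-!
Put `F r = log H(r) - 2d log r - N(r)/(1-a)`. The differential inequality says `F' ≤ 0`, so `F` is
antitone and `log (H r₂ / H r₁) ≤ 2d log (r₂ / r₁) + (N r₂ - N r₁)/(1-a)`; since `0 ≤ N ≤ d`, the
last term is at most `d/(1-a)`, and exponentiating gives the doubling bound.
-/

open Set Real

lemma sub_le_sub_of_hasDerivAt_le {f g f' g' : ℝ → ℝ} {a b : ℝ} (hab : a ≤ b)
    (hf : ∀ x ∈ Icc a b, HasDerivAt f (f' x) x) (hg : ∀ x ∈ Icc a b, HasDerivAt g (g' x) x)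
    (hle : ∀ x ∈ Ioo a b, f' x ≤ g' x) : f b - f a ≤ g b - g a := by
  have hmono : MonotoneOn (fun x => g x - f x) (Icc a b) :=
    monotoneOn_of_hasDerivWithinAt_nonneg (convex_Icc a b)
      (fun x hx => ((hg x hx).sub (hf x hx)).continuousAt.continuousWithinAt)
      (fun x hx => ((hg x (interior_subset hx)).sub (hf x (interior_subset hx))).hasDerivWithinAt)
      (fun x hx => sub_nonneg.2 (hle x (by rwa [interior_Icc] at hx)))
  have := hmono (left_mem_Icc.2 hab) (right_mem_Icc.2 hab) hab
  linarith

lemma log_sub_log_le_of_logDeriv_le {H H' N N' : ℝ → ℝ} {c p r₁ r₂ : ℝ} (hr₁ : 0 < r₁)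
    (h12 : r₁ ≤ r₂) (hHpos : ∀ r ∈ Icc r₁ r₂, 0 < H r)
    (hH : ∀ r ∈ Icc r₁ r₂, HasDerivAt H (H' r) r) (hN : ∀ r ∈ Icc r₁ r₂, HasDerivAt N (N' r) r)
    (hineq : ∀ r ∈ Ioo r₁ r₂, H' r / H r ≤ p / r + c * N' r) :
    log (H r₂) - log (H r₁) ≤ p * (log r₂ - log r₁) + c * (N r₂ - N r₁) := by
  have hlogH : ∀ r ∈ Icc r₁ r₂, HasDerivAt (fun r => log (H r)) (H' r / H r) r :=
    fun r hr => (hH r hr).log (hHpos r hr).ne'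
  have hbound : ∀ r ∈ Icc r₁ r₂,
      HasDerivAt (fun r => p * log r + c * N r) (p / r + c * N' r) r := by
    intro r hr
    rw [div_eq_mul_inv]
    exact ((hasDerivAt_log (hr₁.trans_le hr.1).ne').const_mul p).add ((hN r hr).const_mul c)
  have := sub_le_sub_of_hasDerivAt_le h12 hlogH hbound hineq
  linarith

lemma div_le_exp_mul_rpow_of_log_sub_log_le {x y s t A p : ℝ} (hx : 0 < x) (hy : 0 < y)
    (hs : 0 < s) (ht : 0 < t) (h : log y - log x ≤ A + p * (log s - log t)) :
    y / x ≤ exp A * (s / t) ^ p :=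
  calc y / x = exp (log y - log x) := by rw [exp_sub, exp_log hy, exp_log hx]
    _ ≤ exp (A + p * (log s - log t)) := exp_le_exp.2 h
    _ = exp A * (s / t) ^ p := by
      rw [exp_add, rpow_def_of_pos (div_pos hs ht), log_div hs.ne' ht.ne', mul_comm p]

theorem stmt7_general (a d R : ℝ) (ha : a ∈ Set.Ioo (-1 : ℝ) 1)
    (H H' N N' : ℝ → ℝ)
    (hHpos : ∀ r ∈ Set.Ioc 0 R, 0 < H r)
    (hH : ∀ r ∈ Set.Ioc 0 R, HasDerivAt H (H' r) r)
    (hN : ∀ r ∈ Set.Ioc 0 R, HasDerivAt N (N' r) r)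
    (hNle : ∀ r ∈ Set.Ioc 0 R, N r ≤ d)
    (hNnonneg : ∀ r ∈ Set.Ioc 0 R, 0 ≤ N r)
    (hineq : ∀ r ∈ Set.Ioc 0 R, H' r / H r ≤ 2 * d / r + (1 / (1 - a)) * N' r) :
    ∀ r₁ r₂ : ℝ, 0 < r₁ → r₁ ≤ r₂ → r₂ ≤ R →
      H r₂ / H r₁ ≤ Real.exp (d / (1 - a)) * (r₂ / r₁) ^ (2 * d) := by
  intro r₁ r₂ hr₁ h12 h2R
  have hsub : Icc r₁ r₂ ⊆ Ioc 0 R := fun r hr => ⟨hr₁.trans_le hr.1, hr.2.trans h2R⟩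
  have hr₁R := hsub (left_mem_Icc.2 h12)
  have hr₂R := hsub (right_mem_Icc.2 h12)
  have hlog := log_sub_log_le_of_logDeriv_le hr₁ h12 (fun r hr => hHpos r (hsub hr))
    (fun r hr => hH r (hsub hr)) (fun r hr => hN r (hsub hr))
    (fun r hr => hineq r (hsub (Ioo_subset_Icc_self hr)))
  have hNjump : 1 / (1 - a) * (N r₂ - N r₁) ≤ d / (1 - a) := by
    rw [one_div_mul_eq_div]
    gcongr
    · linarith [ha.2]
    · linarith [hNle r₂ hr₂R, hNnonneg r₁ hr₁R]
  exact div_le_exp_mul_rpow_of_log_sub_log_le (hHpos r₁ hr₁R) (hHpos r₂ hr₂R) hr₂R.1 hr₁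
    (by linarith)

/-- Doubling property: if `N ≤ d` on `(0,R]`, `N ≥ 0`, and
`(log H)' ≤ 2d/r + (1/(1-a)) N'` on `(0,R]`, then for `0 < r₁ ≤ r₂ ≤ R`,
`H(r₂)/H(r₁) ≤ e^{d/(1-a)} (r₂/r₁)^{2d}`. -/
theorem stmt7 (a d R : ℝ) (ha : a ∈ Set.Ioo (-1 : ℝ) 1) (hd : 0 < d) (hR : 0 < R)
    (H H' N N' : ℝ → ℝ)
    (hHpos : ∀ r ∈ Set.Ioc 0 R, 0 < H r)
    (hH : ∀ r ∈ Set.Ioc 0 R, HasDerivAt H (H' r) r)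
    (hN : ∀ r ∈ Set.Ioc 0 R, HasDerivAt N (N' r) r)
    (hNle : ∀ r ∈ Set.Ioc 0 R, N r ≤ d)
    (hNnonneg : ∀ r ∈ Set.Ioc 0 R, 0 ≤ N r)
    (hineq : ∀ r ∈ Set.Ioc 0 R, H' r / H r ≤ 2 * d / r + (1 / (1 - a)) * N' r) :
    ∀ r₁ r₂ : ℝ, 0 < r₁ → r₁ ≤ r₂ → r₂ ≤ R →
      H r₂ / H r₁ ≤ Real.exp (d / (1 - a)) * (r₂ / r₁) ^ (2 * d) :=
  stmt7_general a d R ha H H' N N' hHpos hH hN hNle hNnonneg hineq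
end

section
/- Let g : [1,∞) → [0,∞) be C² and bounded with g(t) → 0 as t → ∞, satisfying g''(t) + g'(t) - μ g(t) ≥ -C e^{-2σt} where μ > 4σ² > 0 and C > 0. Then g(t) ≤ C' e^{-2σt} for all t ≥ 1, where C' depends on C, μ, σ and g(1). -/
/-!
Comparison with the supersolution `φ t = A e^{-2σt}`: since `μ + 2σ - 4σ² > 0`,
`φ'' + φ' - μ φ = -A (μ + 2σ - 4σ²) e^{-2σt}` lies below `-C e^{-2σt}` once `A` is large, and
`A ≥ g(1) e^{2σ}` gives `g ≤ φ` at `t = 1`. The difference `w = g - φ` then satisfies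
`w'' + w' ≥ μ w` and tends to `0`, so a positive value of `w` would produce an interior maximum
`t₀` with `w'(t₀) = 0` and `w''(t₀) ≥ μ w(t₀) > 0`, which the second derivative test forbids.
-/

open Real Filter Set Topology

theorem not_isLocalMax_of_hasDerivAt_of_hasDerivAt_pos {f f' : ℝ → ℝ} {x₀ c : ℝ}
    (hf : ∀ᶠ x in 𝓝 x₀, HasDerivAt f (f' x) x) (hf' : HasDerivAt f' c x₀)
    (hcrit : f' x₀ = 0) (hc : 0 < c) : ¬IsLocalMax f x₀ := by
  intro hmax
  have hderiv : deriv f =ᶠ[𝓝 x₀] f' := hf.mono fun x hx => hx.deriv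
  have hmin : IsLocalMin f x₀ := isLocalMin_of_deriv_deriv_pos
    (by rwa [(hf'.congr_of_eventuallyEq hderiv).deriv]) (by rw [hderiv.eq_of_nhds, hcrit])
    hf.self_of_nhds.continuousAt
  -- being both a local minimum and a local maximum, `x₀` lies in a flat piece of `f`, forcing `c = 0`
  have hflat : f =ᶠ[𝓝 x₀] fun _ => f x₀ :=
    (hmax.and hmin).mono fun x hx => le_antisymm hx.1 hx.2
  have hf'_zero : f' =ᶠ[𝓝 x₀] fun _ => 0 := by
    filter_upwards [hflat.eventually_nhds, hf] with x hx hfx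
    exact hfx.unique ((hasDerivAt_const x (f x₀)).congr_of_eventuallyEq hx)
  exact hc.ne' (hf'.unique ((hasDerivAt_const x₀ 0).congr_of_eventuallyEq hf'_zero))

theorem exists_isMaxOn_Ici_of_tendsto_zero {h : ℝ → ℝ} {a t₁ : ℝ}
    (hcont : ContinuousOn h (Ici a)) (hlim : Tendsto h atTop (𝓝 0)) (ht₁ : a ≤ t₁)
    (hpos : 0 < h t₁) : ∃ t₀ ∈ Ici a, IsMaxOn h (Ici a) t₀ := by
  refine hcont.exists_isMaxOn' isClosed_Ici ht₁ ?_
  rw [cocompact_eq_atBot_atTop, inf_sup_right, (disjoint_atBot_principal_Ici a).eq_bot,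
    bot_sup_eq]
  exact ((hlim.eventually (gt_mem_nhds hpos)).mono fun _ => le_of_lt).filter_mono inf_le_left

theorem nonpos_of_deriv2_pos_of_deriv_eq_zero {h h' h'' : ℝ → ℝ} {a : ℝ}
    (hd1 : ∀ t ≥ a, HasDerivAt h (h' t) t) (hd2 : ∀ t ≥ a, HasDerivAt h' (h'' t) t)
    (hcrit : ∀ t > a, 0 < h t → h' t = 0 → 0 < h'' t)
    (ha : h a ≤ 0) (hlim : Tendsto h atTop (𝓝 0)) : ∀ t ≥ a, h t ≤ 0 := by
  intro t₁ ht₁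
  by_contra! hpos
  obtain ⟨t₀, ht₀, hmax⟩ := exists_isMaxOn_Ici_of_tendsto_zero
    (fun t ht => (hd1 t ht).continuousAt.continuousWithinAt) hlim ht₁ hpos
  have ht₀pos : 0 < h t₀ := hpos.trans_le (hmax ht₁)
  have ht₀a : a < t₀ := lt_of_le_of_ne ht₀ (by rintro rfl; linarith)
  have hloc : IsLocalMax h t₀ := hmax.isLocalMax (Ici_mem_nhds ht₀a)
  have hd1_near : ∀ᶠ t in 𝓝 t₀, HasDerivAt h (h' t) t := by
    filter_upwards [Ici_mem_nhds ht₀a] with t ht using hd1 t ht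
  have hcrit₀ : h' t₀ = 0 := hloc.hasDerivAt_eq_zero (hd1 t₀ ht₀)
  exact not_isLocalMax_of_hasDerivAt_of_hasDerivAt_pos hd1_near (hd2 t₀ ht₀) hcrit₀
    (hcrit t₀ ht₀a ht₀pos hcrit₀) hloc

theorem le_of_deriv2_add_deriv_sub_mul_le {g g' g'' φ φ' φ'' : ℝ → ℝ} {μ a : ℝ} (hμ : 0 < μ)
    (hg : ∀ t ≥ a, HasDerivAt g (g' t) t) (hg' : ∀ t ≥ a, HasDerivAt g' (g'' t) t)
    (hφ : ∀ t ≥ a, HasDerivAt φ (φ' t) t) (hφ' : ∀ t ≥ a, HasDerivAt φ' (φ'' t) t)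
    (hsuper : ∀ t ≥ a, φ'' t + φ' t - μ * φ t ≤ g'' t + g' t - μ * g t)
    (ha : g a ≤ φ a) (hlim : Tendsto (g - φ) atTop (𝓝 0)) : ∀ t ≥ a, g t ≤ φ t := by
  intro t ht
  have hcrit : ∀ t > a, 0 < (g - φ) t → (g' - φ') t = 0 → 0 < (g'' - φ'') t := by
    intro t ht hpos hzero
    simp only [Pi.sub_apply] at hpos hzero ⊢
    nlinarith [hsuper t ht.le]
  simpa [sub_nonpos] using nonpos_of_deriv2_pos_of_deriv_eq_zero
    (fun t ht => (hg t ht).sub (hφ t ht)) (fun t ht => (hg' t ht).sub (hφ' t ht)) hcrit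
    (sub_nonpos.2 ha) hlim t ht

theorem hasDerivAt_const_mul_exp_mul (A k t : ℝ) :
    HasDerivAt (fun t => A * exp (k * t)) (A * k * exp (k * t)) t := by
  have := (((hasDerivAt_id t).const_mul k).exp).const_mul A
  simp only [id, mul_one] at this
  exact this.congr_deriv (by ring)

theorem stmt14_general (μ σ C : ℝ) (hσ : 0 < σ) (hμ : 4 * σ ^ 2 < μ) (hC : 0 < C)
    (g g' g'' : ℝ → ℝ)
    (hd1 : ∀ t ≥ (1:ℝ), HasDerivAt g (g' t) t)
    (hd2 : ∀ t ≥ (1:ℝ), HasDerivAt g' (g'' t) t)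
    (hgpos : ∀ t ≥ (1:ℝ), 0 ≤ g t)
    (hlim : Filter.Tendsto g Filter.atTop (nhds 0))
    (hineq : ∀ t ≥ (1:ℝ), -C * Real.exp (-2 * σ * t) ≤ g'' t + g' t - μ * g t) :
    ∃ C' > 0, ∀ t ≥ (1:ℝ), g t ≤ C' * Real.exp (-2 * σ * t) := by
  have hμ₀ : 0 < μ := (by positivity : (0:ℝ) < 4 * σ ^ 2).trans hμ
  have hden : 0 < μ + 2 * σ - 4 * σ ^ 2 := by nlinarith
  set A := C / (μ + 2 * σ - 4 * σ ^ 2) + g 1 * exp (2 * σ) with hA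
  have hg1 : 0 ≤ g 1 * exp (2 * σ) := mul_nonneg (hgpos 1 le_rfl) (exp_pos _).le
  have hA₀ : 0 < A := add_pos_of_pos_of_nonneg (div_pos hC hden) hg1
  have hAden : C ≤ A * (μ + 2 * σ - 4 * σ ^ 2) := by
    rw [hA, add_mul, div_mul_cancel₀ _ hden.ne']
    linarith [mul_nonneg hg1 hden.le]
  have hstart : g 1 ≤ A * exp (-2 * σ * 1) := by
    have : 0 ≤ C / (μ + 2 * σ - 4 * σ ^ 2) * exp (-2 * σ * 1) :=
      mul_nonneg (div_pos hC hden).le (exp_pos _).le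
    rw [hA, add_mul, mul_assoc (g 1), ← exp_add]
    norm_num at this ⊢
    linarith
  have hdiff : Tendsto (g - fun t => A * exp (-2 * σ * t)) atTop (𝓝 0) := by
    simpa [Pi.sub_def] using hlim.sub <| (tendsto_exp_comp_nhds_zero.2
      (tendsto_id.const_mul_atTop_of_neg (by linarith : -2 * σ < 0))).const_mul A
  refine ⟨A, hA₀, le_of_deriv2_add_deriv_sub_mul_le hμ₀ hd1 hd2
    (fun t _ => hasDerivAt_const_mul_exp_mul A _ t)
    (fun t _ => hasDerivAt_const_mul_exp_mul (A * (-2 * σ)) _ t) ?_ hstart hdiff⟩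
  intro t ht
  nlinarith [hineq t ht, mul_le_mul_of_nonneg_right hAden (exp_pos (-2 * σ * t)).le]

/-- Comparison principle: if `g ≥ 0` is bounded with `g → 0` at `∞` and
`g'' + g' - μ g ≥ -C e^{-2σt}` with `μ > 4σ² > 0`, then `g(t) ≤ C' e^{-2σt}`. -/
theorem stmt14 (μ σ C : ℝ) (hσ : 0 < σ) (hμ : 4 * σ ^ 2 < μ) (hC : 0 < C)
    (g g' g'' : ℝ → ℝ)
    (hd1 : ∀ t ≥ (1:ℝ), HasDerivAt g (g' t) t)
    (hd2 : ∀ t ≥ (1:ℝ), HasDerivAt g' (g'' t) t)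
    (hgpos : ∀ t ≥ (1:ℝ), 0 ≤ g t)
    (hbdd : ∃ M, ∀ t ≥ (1:ℝ), g t ≤ M)
    (hlim : Filter.Tendsto g Filter.atTop (nhds 0))
    (hineq : ∀ t ≥ (1:ℝ), -C * Real.exp (-2 * σ * t) ≤ g'' t + g' t - μ * g t) :
    ∃ C' > 0, ∀ t ≥ (1:ℝ), g t ≤ C' * Real.exp (-2 * σ * t) :=
  stmt14_general μ σ C hσ hμ hC g g' g'' hd1 hd2 hgpos hlim hineq
end
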